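/- For A ∈ SC(n), the longest element w_n of W_n (the element acting as −id on ℝⁿ) belongs to W_A if and only if A is a positive signed composition of n. -/

import Mathlib

/- Common definitions: the Coxeter group of type Bₙ realized as signed permutations,
   signed compositions, the reflection subgroups `W_A`, double partitions, marks,
   permutation characters, and the action on `ℝⁿ`. -/

attribute [local instance] Classical.propDecidable

namespace GBA

/-- The ambient group of permutations of `ℤ`. -/
abbrev Q : Type := Equiv.Perm ℤ

/-- The generator `t_k`, swapping `k` and `-k`. -/
def tP (k : ℕ) : Q := Equiv.swap (k : ℤ) (-(k : ℤ))

/-- The generator `s_k`, swapping `k ↔ k+1` and `-k ↔ -(k+1)`. -/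
def sP (k : ℕ) : Q := Equiv.swap (k : ℤ) ((k : ℤ) + 1) * Equiv.swap (-(k : ℤ)) (-((k : ℤ) + 1))

/-- The Coxeter group `Wₙ` of type `Bₙ`, realized as the group of permutations `w`
of `{-n, …, -1, 1, …, n}` (fixing everything else) with `w (-i) = - w i` for all `i`. -/
def W (n : ℕ) : Subgroup Q where
  carrier := {w | (∀ i : ℤ, w (-i) = -(w i)) ∧ (∀ i : ℤ, (n : ℤ) < |i| → w i = i)}
  one_mem' := by refine ⟨fun i => ?_, fun i _ => ?_⟩ <;> simp
  mul_mem' := by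
    rintro a b ⟨ha1, ha2⟩ ⟨hb1, hb2⟩
    refine ⟨fun i => ?_, fun i hi => ?_⟩
    · simp only [Equiv.Perm.mul_apply, hb1, ha1]
    · simp only [Equiv.Perm.mul_apply, hb2 i hi, ha2 i hi]
  inv_mem' := by
    rintro a ⟨ha1, ha2⟩
    refine ⟨fun i => a.injective ?_, fun i hi => a.injective ?_⟩
    · rw [show ∀ x, a (a⁻¹ x) = x from fun x => Equiv.apply_symm_apply a x, ha1, show ∀ x, a (a⁻¹ x) = x from fun x => Equiv.apply_symm_apply a x]
    · rw [show ∀ x, a (a⁻¹ x) = x from fun x => Equiv.apply_symm_apply a x, ha2 i hi]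

/-- A signed composition of `n`: a list of nonzero integers whose absolute values sum to `n`. -/
def SC (n : ℕ) : Type := {A : List ℤ // (∀ a ∈ A, a ≠ 0) ∧ (A.map Int.natAbs).sum = n}

/-- The list of Coxeter generators attached to a signed composition (with an offset):
for each part `a` occupying positions `off+1, …, off+|a|`, the generators
`s_p` for `off+1 ≤ p ≤ off+|a|-1`, together with `t_{off+1}` if `a > 0`. -/
def genList : ℕ → List ℤ → List Q
  | _, [] => []
  | off, a :: rest =>
      ((List.range (a.natAbs - 1)).map fun p => sP (off + p + 1))
        ++ (if 0 < a then [tP (off + 1)] else [])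
        ++ genList (off + a.natAbs) rest

/-- The generating set `S_A` of the reflection subgroup `W_A`. -/
def SA {n : ℕ} (A : SC n) : Set Q := {x | x ∈ genList 0 A.1}

/-- The reflection subgroup `W_A` attached to a signed composition `A` of `n`. -/
def WA {n : ℕ} (A : SC n) : Subgroup Q := Subgroup.closure (SA A)

/-- The canonical Coxeter element `c_A` of `(W_A, S_A)`: the product of the
generators in `S_A`, each occurring exactly once. -/
def cox {n : ℕ} (A : SC n) : Q := (genList 0 A.1).prod

/-- `c` is a Coxeter element of `(W_A, S_A)`: a product of all elements of `S_A`,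
each occurring exactly once, in some order. -/
def IsCox {n : ℕ} (A : SC n) (c : Q) : Prop :=
  ∃ L : List Q, L.Perm (genList 0 A.1) ∧ L.prod = c

/-- The generating set `Sₙ = {t, s₁, …, s_{n-1}}` of `Wₙ`. -/
def SFull (n : ℕ) : Set Q := {x | x ∈ genList 0 [(n : ℤ)]}

/-- The length of `w` with respect to a generating set `S` (the minimal length
of an expression of `w` as a product of elements of `S`). -/
noncomputable def lenS (S : Set Q) (w : Q) : ℕ :=
  sInf {k | ∃ L : List Q, (∀ x ∈ L, x ∈ S) ∧ L.length = k ∧ L.prod = w}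

/-- The length function of `(Wₙ, Sₙ)`. -/
noncomputable def len (n : ℕ) : Q → ℕ := lenS (SFull n)

/-- A double partition of `n`: a pair `(λ⁺, λ⁻)` of partitions with `|λ⁺| + |λ⁻| = n`,
encoded by `|λ⁺| = k`. -/
def DP (n : ℕ) : Type := Σ k : Fin (n + 1), Nat.Partition k.1 × Nat.Partition (n - k.1)

noncomputable instance (n : ℕ) : Fintype (DP n) := by unfold DP; infer_instance
noncomputable instance (n : ℕ) : DecidableEq (DP n) := by unfold DP; infer_instance

private lemma filter_sum_aux (L : List ℤ) (hL : ∀ a ∈ L, a ≠ 0) :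
    ((L.filter (fun a => 0 < a)).map Int.natAbs).sum
      + ((L.filter (fun a => a < 0)).map Int.natAbs).sum = (L.map Int.natAbs).sum := by
  induction L with
  | nil => simp
  | cons a L ih =>
    have ha := hL a (by simp)
    have ih' := ih (fun x hx => hL x (by simp [hx]))
    by_cases h : 0 < a
    · simp only [List.filter_cons]
      rw [if_pos (by simpa using h), if_neg (by simpa using (by omega : ¬ a < 0))]
      simp only [List.map_cons, List.sum_cons]
      omega
    · have h' : a < 0 := by omega
      simp only [List.filter_cons]
      rw [if_neg (by simpa using h), if_pos (by simpa using h')]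
      simp only [List.map_cons, List.sum_cons]
      omega

/-- `λ̂ := λ⁺ ⊔ λ⁻`, the signed composition of `n` whose positive parts are the
parts of `λ⁺` and whose negative parts are the negatives of the parts of `λ⁻`. -/
noncomputable def hat {n : ℕ} (l : DP n) : SC n :=
  ⟨l.2.1.parts.toList.map (fun a : ℕ => (a : ℤ)) ++
      l.2.2.parts.toList.map (fun a : ℕ => -(a : ℤ)),
    by
    constructor
    · intro a ha
      rw [List.mem_append] at ha
      rcases ha with h | h <;> obtain ⟨b, hb, rfl⟩ := List.exists_of_mem_map h
      · have := l.2.1.parts_pos (Multiset.mem_toList.1 hb); omega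
      · have := l.2.2.parts_pos (Multiset.mem_toList.1 hb); omega
    · have hk : (l.1 : ℕ) ≤ n := Nat.lt_succ_iff.1 l.1.2
      have h1 := l.2.1.parts_sum
      have h2 := l.2.2.parts_sum
      rw [List.map_append, List.sum_append, List.map_map, List.map_map]
      simp only [Function.comp_def, Int.natAbs_neg, Int.natAbs_natCast]
      simp only [List.map_id']
      rw [Multiset.sum_toList, Multiset.sum_toList, h1, h2]
      omega⟩

/-- `λ(A) ∈ DP(n)`: the double partition obtained by collecting the positive parts
and the (absolute values of the) negative parts of `A`. -/
noncomputable def lamOf {n : ℕ} (A : SC n) : DP n :=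
  ⟨⟨((A.1.filter (fun a => 0 < a)).map Int.natAbs).sum, by
      have := filter_sum_aux A.1 A.2.1
      rw [A.2.2] at this
      omega⟩,
    ⟨(((A.1.filter (fun a => 0 < a)).map Int.natAbs : List ℕ) : Multiset ℕ),
      fun {i} hi => by
        obtain ⟨b, hb, rfl⟩ := List.exists_of_mem_map (by exact_mod_cast hi)
        have := A.2.1 b (List.mem_of_mem_filter hb)
        omega,
      by simp⟩,
    ⟨(((A.1.filter (fun a => a < 0)).map Int.natAbs : List ℕ) : Multiset ℕ),
      fun {i} hi => by
        obtain ⟨b, hb, rfl⟩ := List.exists_of_mem_map (by exact_mod_cast hi)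
        have := A.2.1 b (List.mem_of_mem_filter hb)
        omega,
      by
        have := filter_sum_aux A.1 A.2.1
        rw [A.2.2] at this
        simp only [Multiset.sum_coe]
        omega⟩⟩

/-- The permutation character `Ind_{W_A}^{Wₙ} 1`: its value at `w ∈ Wₙ` is the number
of cosets `x W_A` in `Wₙ/W_A` fixed by `w`, i.e. with `x⁻¹ w x ∈ W_A`. -/
noncomputable def phi (n : ℕ) (A : SC n) (w : Q) : ℚ :=
  Nat.card {q : W n ⧸ (WA A).subgroupOf (W n) //
    ∃ x : W n, (QuotientGroup.mk x : W n ⧸ (WA A).subgroupOf (W n)) = q ∧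
      (x : Q)⁻¹ * w * x ∈ WA A}

/-- The matrix `(φ_λ(c_μ))_{λ,μ ∈ DP(n)}`. -/
noncomputable def phiMat (n : ℕ) : Matrix (DP n) (DP n) ℚ :=
  fun lam mu => phi n (hat lam) (cox (hat mu))

/-- The matrix `(u_{λμ})`, the inverse of `(φ_λ(c_μ))`. -/
noncomputable def uMat (n : ℕ) : Matrix (DP n) (DP n) ℚ := (phiMat n)⁻¹

/-- The conjugacy class `C(λ)` of `Wₙ` containing the Coxeter elements `c_A`
for `λ(A) = λ`, as a subset of the ambient permutation group. -/
def CC (n : ℕ) (lam : DP n) : Set Q :=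
  {w | ∃ g ∈ W n, g * cox (hat lam) * g⁻¹ = w}

/-- The set `D_A` of distinguished (minimal length) coset representatives of `W_A` in `Wₙ`. -/
noncomputable def DA {n : ℕ} (A : SC n) : Set Q :=
  {x | x ∈ W n ∧ ∀ s ∈ SA A, len n x < len n (x * s)}

/-- `D_{AB} = D_A⁻¹ ∩ D_B`. -/
noncomputable def DAB {n : ℕ} (A B : SC n) : Set Q := {x | x⁻¹ ∈ DA A ∧ x ∈ DA B}

/-- The mark `μ_{CA}` of `W_A` on `Wₙ/W_C`: the number of cosets `x W_C` with
`x⁻¹ W_A x ⊆ W_C`. -/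
noncomputable def mark (n : ℕ) (C A : SC n) : ℕ :=
  Nat.card {q : W n ⧸ (WA C).subgroupOf (W n) //
    ∃ x : W n, (QuotientGroup.mk x : W n ⧸ (WA C).subgroupOf (W n)) = q ∧
      ∀ y ∈ WA A, (x : Q)⁻¹ * y * (x : Q) ∈ WA C}

/-- `𝒲(B) = D_{BB}^⊆ = {x ∈ D_{BB} : x⁻¹ W_B x ⊆ W_B}`, a complement of
`W_B` in its normalizer `N_{Wₙ}(W_B)`. -/
noncomputable def Wcal {n : ℕ} (B : SC n) : Set Q :=
  {x | x ∈ DAB B B ∧ ∀ y ∈ WA B, x⁻¹ * y * x ∈ WA B}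

/-- The induction to `Wₙ` of a class function `f` on a subgroup `H ⊆ Wₙ`
(`f` is extended by zero outside `H`):
`(Ind_H^{Wₙ} f)(w) = |H|⁻¹ Σ_{x ∈ Wₙ, x⁻¹wx ∈ H} f(x⁻¹wx)`. -/
noncomputable def ind (n : ℕ) (H : Subgroup Q) (f : Q → ℚ) (w : Q) : ℚ :=
  (∑ᶠ x ∈ (W n : Set Q), if x⁻¹ * w * x ∈ H then f (x⁻¹ * w * x) else 0) / (Nat.card H)

/-- The action of a signed permutation on `ℝⁿ` (coordinates indexed `1, …, n`):
`w` sends `e_i` to `sgn(w(i)) e_{|w(i)|}`, so `(w · v)_j = sgn(w⁻¹(j)) v_{|w⁻¹(j)|}`. -/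
noncomputable def act (n : ℕ) (w : Q) (v : Fin n → ℝ) : Fin n → ℝ := fun j =>
  (if 0 < w⁻¹ ((j : ℕ) + 1 : ℤ) then (1 : ℝ) else -1) *
    (if h : (w⁻¹ ((j : ℕ) + 1 : ℤ)).natAbs - 1 < n then v ⟨(w⁻¹ ((j : ℕ) + 1 : ℤ)).natAbs - 1, h⟩
     else 0)

/-- `Fix(X) = {v ∈ ℝⁿ : x(v) = v for all x ∈ X}`. -/
noncomputable def FixSet (n : ℕ) (X : Set Q) : Set (Fin n → ℝ) :=
  {v | ∀ x ∈ X, act n x v = v}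

/-- The parabolic closure `A(X)`: the pointwise stabilizer in `Wₙ` of `Fix(X)`. -/
noncomputable def pClosure (n : ℕ) (X : Set Q) : Set Q :=
  {w | w ∈ W n ∧ ∀ v ∈ FixSet n X, act n w v = v}

/-- The longest element `wₙ` of `Wₙ`, the signed permutation `i ↦ -i`
(acting as `-id` on `ℝⁿ`). -/
def wLong (n : ℕ) : Q :=
  Function.Involutive.toPerm (fun i => if |i| ≤ (n : ℤ) then -i else i)
    (by intro i; by_cases h : |i| ≤ (n : ℤ) <;> simp [h, abs_neg])

/-- The double partition `((n), ∅)`. -/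
noncomputable def topDP (n : ℕ) : DP n :=
  ⟨⟨n, Nat.lt_succ_self n⟩, Nat.Partition.indiscrete n,
    ⟨0, by simp, by simp⟩⟩

/-- The double partition `(∅, (1ⁿ)) = λ((-1, …, -1))`. -/
noncomputable def botDP (n : ℕ) : DP n :=
  ⟨⟨0, Nat.succ_pos n⟩, ⟨0, by simp, by simp⟩,
    ⟨Multiset.replicate n 1,
      fun {i} hi => by rw [Multiset.eq_of_mem_replicate hi]; norm_num,
      by simp [Multiset.sum_replicate]⟩⟩

/- A negative part `a` of `A`, occupying positions `lo + 1, …, lo + |a|`, contributes the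
generators `s_p` inside its block but no `t`, while every other generator moves only points
outside `±(lo, lo + |a|]`; so `W_A` stabilizes the set `(lo, lo + |a|]`, which `wₙ` does not,
as it sends `lo + 1` to `-(lo + 1)`. If all parts are positive, each block contributes
`t_{lo+1}` and `s_{lo+1}, …, s_{lo+|a|-1}`, so `t_{k+1} = s_k t_k s_k` puts all of
`t_1, …, t_n` into `W_A`, and `wₙ = t_1 ⋯ t_n`. -/

open MulAction Pointwise

lemma genList_append (off : ℕ) (L₁ L₂ : List ℤ) :
    genList off (L₁ ++ L₂) = genList off L₁ ++ genList (off + (L₁.map Int.natAbs).sum) L₂ := by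
  induction L₁ generalizing off with
  | nil => simp [genList]
  | cons a L₁ ih => simp [genList, ih, Nat.add_assoc]

lemma genList_cons_of_neg {a : ℤ} (ha : a < 0) (off : ℕ) (L : List ℤ) :
    genList off (a :: L) =
      (List.range (a.natAbs - 1)).map (fun p => sP (off + p + 1)) ++ genList (off + a.natAbs) L := by
  simp [genList, ha.not_gt]

lemma mem_genList {off : ℕ} {L : List ℤ} {g : Q} (hg : g ∈ genList off L) :
    (∃ p, off < p ∧ p < off + (L.map Int.natAbs).sum ∧ g = sP p) ∨
      ∃ k, off < k ∧ k ≤ off + (L.map Int.natAbs).sum ∧ g = tP k := by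
  induction L generalizing off with
  | nil => simp [genList] at hg
  | cons a L ih =>
    simp only [genList, List.mem_append, List.mem_map, List.mem_range] at hg
    simp only [List.map_cons, List.sum_cons]
    rcases hg with (⟨p, hp, rfl⟩ | hg) | hg
    · exact Or.inl ⟨off + p + 1, by omega, by omega, rfl⟩
    · split_ifs at hg with ha
      · have := Int.natAbs_pos.2 ha.ne'
        exact Or.inr ⟨off + 1, by omega, by omega, List.mem_singleton.1 hg⟩
      · simp at hg
    · rcases ih hg with ⟨p, hp₁, hp₂, rfl⟩ | ⟨k, hk₁, hk₂, rfl⟩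
      · exact Or.inl ⟨p, by omega, by omega, rfl⟩
      · exact Or.inr ⟨k, by omega, by omega, rfl⟩

lemma sP_mem_stabilizer_Ioc {lo hi : ℤ} (hlo : 0 ≤ lo) {p : ℕ} (hplo : (p : ℤ) ≠ lo)
    (hphi : (p : ℤ) ≠ hi) : sP p ∈ stabilizer Q (Set.Ioc lo hi) := by
  refine mul_mem (Equiv.swap_mem_stabilizer.2 ?_) (Equiv.swap_mem_stabilizer.2 ?_) <;>
    simp only [Set.mem_Ioc] <;> omega

lemma tP_mem_stabilizer_Ioc {lo hi : ℤ} (hlo : 0 ≤ lo) {k : ℕ} (hk : (k : ℤ) ∉ Set.Ioc lo hi) :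
    tP k ∈ stabilizer Q (Set.Ioc lo hi) := by
  refine Equiv.swap_mem_stabilizer.2 ?_
  simp only [Set.mem_Ioc] at hk ⊢
  omega

lemma genList_subset_stabilizer_of_neg {a : ℤ} (ha : a < 0) (off : ℕ) (L₁ L₂ : List ℤ) :
    {g | g ∈ genList off (L₁ ++ a :: L₂)} ⊆
      stabilizer Q (Set.Ioc (off + (L₁.map Int.natAbs).sum : ℤ)
        (off + (L₁.map Int.natAbs).sum + a.natAbs)) := by
  intro g (hg : g ∈ _)
  simp only [genList_append, genList_cons_of_neg ha, List.mem_append, List.mem_map,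
    List.mem_range] at hg
  rcases hg with hg | ⟨p, hp, rfl⟩ | hg
  · rcases mem_genList hg with ⟨p, hp₁, hp₂, rfl⟩ | ⟨k, hk₁, hk₂, rfl⟩
    · exact sP_mem_stabilizer_Ioc (by positivity) (by omega) (by omega)
    · exact tP_mem_stabilizer_Ioc (by positivity) (by simp only [Set.mem_Ioc]; omega)
  · exact sP_mem_stabilizer_Ioc (by positivity) (by omega) (by omega)
  · rcases mem_genList hg with ⟨p, hp₁, hp₂, rfl⟩ | ⟨k, hk₁, hk₂, rfl⟩
    · exact sP_mem_stabilizer_Ioc (by positivity) (by omega) (by omega)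
    · exact tP_mem_stabilizer_Ioc (by positivity) (by simp only [Set.mem_Ioc]; omega)

lemma wLong_apply (n : ℕ) (x : ℤ) : wLong n x = if |x| ≤ n then -x else x := rfl

lemma wLong_notMem_stabilizer_Ioc {n : ℕ} {lo hi : ℤ} (hlo : 0 ≤ lo) (hlohi : lo < hi)
    (hlon : lo < n) : wLong n ∉ stabilizer Q (Set.Ioc lo hi) := by
  intro h
  have := (mem_stabilizer_set.1 h (lo + 1)).2 (by simp only [Set.mem_Ioc]; omega)
  rw [Equiv.Perm.smul_def, wLong_apply, if_pos (by rw [abs_le]; omega)] at this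
  simp only [Set.mem_Ioc] at this
  omega

lemma tP_succ_eq_conj {q : ℕ} (hq : 1 ≤ q) : tP (q + 1) = sP q * tP q * sP q := by
  have hnodup : [(q : ℤ), q + 1, -q, -(q + 1)].Nodup := by simp; omega
  have hinv : (sP q)⁻¹ = sP q := by
    rw [sP, mul_inv_rev, Equiv.swap_inv, Equiv.swap_inv]
    exact ((Equiv.Perm.disjoint_swap_swap hnodup).commute).eq.symm
  have hpos : sP q q = q + 1 := by
    rw [sP, Equiv.Perm.mul_apply, Equiv.swap_apply_of_ne_of_ne (a := -(q : ℤ)) (by omega) (by omega),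
      Equiv.swap_apply_left]
  have hneg : sP q (-q) = -(q + 1) := by
    rw [sP, Equiv.Perm.mul_apply, Equiv.swap_apply_left,
      Equiv.swap_apply_of_ne_of_ne (by omega) (by omega)]
  calc tP (q + 1) = Equiv.swap (sP q q) (sP q (-q)) := by rw [hpos, hneg, tP]; push_cast; rfl
    _ = sP q * tP q * sP q := by rw [Equiv.swap_apply_apply, hinv, tP]

lemma wLong_succ (n : ℕ) : wLong (n + 1) = wLong n * tP (n + 1) := by
  ext x
  simp only [Equiv.Perm.mul_apply, wLong_apply, tP, Equiv.swap_apply_def, abs_le]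
  split_ifs <;> push_cast at * <;> omega

lemma wLong_eq_prod_tP (n : ℕ) : wLong n = ((List.range n).map fun j => tP (j + 1)).prod := by
  induction n with
  | zero => ext x; simp only [wLong_apply]; split_ifs <;> simp_all
  | succ n ih => simp [List.range_succ, ← ih, wLong_succ]

lemma tP_mem_closure_genList_cons {a : ℤ} (ha : 0 < a) (off : ℕ) (L : List ℤ) {i : ℕ}
    (hi : i < a.natAbs) : tP (off + i + 1) ∈ Subgroup.closure {g | g ∈ genList off (a :: L)} := by
  induction i with
  | zero => exact Subgroup.subset_closure (by simp [genList, ha])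
  | succ i ih =>
    have hs : sP (off + i + 1) ∈ Subgroup.closure {g | g ∈ genList off (a :: L)} :=
      Subgroup.subset_closure (show _ ∈ genList off (a :: L) by
        simp only [genList, List.mem_append, List.mem_map, List.mem_range]
        exact Or.inl (Or.inl ⟨i, by omega, rfl⟩))
    rw [tP_succ_eq_conj (by omega)]
    exact mul_mem (mul_mem hs (ih (by omega))) hs

lemma tP_mem_closure_genList {L : List ℤ} (hL : ∀ a ∈ L, 0 < a) {off j : ℕ} (hoff : off < j)
    (hj : j ≤ off + (L.map Int.natAbs).sum) : tP j ∈ Subgroup.closure {g | g ∈ genList off L} := by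
  induction L generalizing off with
  | nil => simp only [List.map_nil, List.sum_nil, add_zero] at hj; omega
  | cons a L ih =>
    simp only [List.map_cons, List.sum_cons] at hj
    by_cases hja : j ≤ off + a.natAbs
    · obtain ⟨i, rfl⟩ := Nat.exists_eq_add_of_lt hoff
      exact tP_mem_closure_genList_cons (hL a (by simp)) off L (by omega)
    · refine Subgroup.closure_mono (fun g (hg : g ∈ _) => ?_)
        (ih (fun b hb => hL b (by simp [hb])) (off := off + a.natAbs) (by omega) (by omega))
      exact show g ∈ genList off (a :: L) by simp only [genList, List.mem_append]; exact Or.inr hg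

/-- for `A ∈ SC(n)`, the longest element `wₙ` of `Wₙ` (acting as `-id`
on `ℝⁿ`) belongs to `W_A` if and only if `A` is a positive signed composition. -/
theorem statement_14 (n : ℕ) (A : SC n) :
    wLong n ∈ WA A ↔ ∀ a ∈ A.1, 0 < a := by
  obtain ⟨A, hA0, hAn⟩ := A
  constructor
  · intro hw a ha
    by_contra hneg
    have ha_neg : a < 0 := lt_of_le_of_ne (not_lt.1 hneg) (hA0 a ha)
    obtain ⟨L₁, L₂, rfl⟩ := List.append_of_mem ha
    have hWA := (Subgroup.closure_le _).2 (genList_subset_stabilizer_of_neg ha_neg 0 L₁ L₂)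
    simp only [List.map_append, List.map_cons, List.sum_append, List.sum_cons] at hAn
    exact wLong_notMem_stabilizer_Ioc (by positivity) (by omega) (by omega) (hWA hw)
  · intro hpos
    rw [wLong_eq_prod_tP]
    refine list_prod_mem (List.forall_mem_map.2 fun j hj => ?_)
    rw [List.mem_range] at hj
    exact tP_mem_closure_genList hpos (by omega) (by simpa [hAn] using hj)

end GBA
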